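/- In a quantity space X over a field K with basis B, a quantity x is invertible if and only if μ_B(x) ≠ 0, and in that case μ_B(x⁻¹) = μ_B(x)⁻¹. -/

import Mathlib

/-- A scalable monoid `X` over a commutative unital ring `R`: a monoid with a
scalar multiplication satisfying `1 • x = x`, `α • (β • x) = (α*β) • x` and
`α • (x*y) = (α • x) * y = x * (α • y)`. -/
class ScalableMonoid (R X : Type*) [CommRing R] [Monoid X] extends SMul R X where
  one_smul : ∀ x : X, (1 : R) • x = x
  mul_smul : ∀ (α β : R) (x : X), α • β • x = (α * β) • x
  smul_mul_assoc : ∀ (α : R) (x y : X), α • (x * y) = (α • x) * y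
  mul_smul_comm : ∀ (α : R) (x y : X), α • (x * y) = x * (α • y)

/-- Commensurability: `x ∼ y` iff `α • x = β • y` for some scalars `α β`. -/
def Commen (R : Type*) {X : Type*} [CommRing R] [Monoid X] [ScalableMonoid R X]
    (x y : X) : Prop :=
  ∃ α β : R, α • x = β • y

/-- A (finite) basis for a commutative scalable monoid over a field `K`:
a family of invertible elements such that every `x` has a unique expansion
`x = μ • ∏ i, b i ^ k i` with `μ ∈ K` and integer exponents `k i`. -/
def IsBasis (K : Type*) {X : Type*} [Field K] [CommMonoid X] [ScalableMonoid K X]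
    {n : ℕ} (b : Fin n → Xˣ) : Prop :=
  ∀ x : X, ∃! p : K × (Fin n → ℤ), x = p.1 • ((∏ i, b i ^ p.2 i : Xˣ) : X)

/-- The qMeasure of `x` relative to the basis `b`: the unique scalar in its expansion. -/
noncomputable def qMeasure {K X : Type*} [Field K] [CommMonoid X] [ScalableMonoid K X]
    {n : ℕ} {b : Fin n → Xˣ} (hB : IsBasis K b) (x : X) : K :=
  (hB x).exists.choose.1

/-! Multiplying basis expansions shows that `qMeasure` is multiplicative with `qMeasure 1 = 1`,
so a unit has a nonzero measure whose inverse is the measure of its inverse. Conversely, if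
`x = μ • u` with `μ ≠ 0` and `u` a product of basis units, then `μ⁻¹ • u⁻¹` inverts `x`. -/

namespace ScalableMonoid

variable {R X : Type*} [CommRing R] [Monoid X] [ScalableMonoid R X]

theorem smul_mul_smul (α β : R) (x y : X) : (α • x) * (β • y) = (α * β) • (x * y) := by
  rw [← smul_mul_assoc, ← mul_smul_comm, mul_smul]

theorem isUnit_smul_units {K X : Type*} [Field K] [Monoid X] [ScalableMonoid K X] {μ : K}
    (hμ : μ ≠ 0) (u : Xˣ) : IsUnit (μ • (u : X)) :=
  ⟨⟨μ • (u : X), μ⁻¹ • ((u⁻¹ : Xˣ) : X),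
    by rw [smul_mul_smul, mul_inv_cancel₀ hμ, one_smul, u.mul_inv],
    by rw [smul_mul_smul, inv_mul_cancel₀ hμ, one_smul, u.inv_mul]⟩, rfl⟩

end ScalableMonoid

section QMeasure

variable {K X : Type*} [Field K] [CommMonoid X] [ScalableMonoid K X] {n : ℕ} {b : Fin n → Xˣ}

noncomputable def qExponent (hB : IsBasis K b) (x : X) : Fin n → ℤ :=
  (hB x).exists.choose.2

theorem eq_qMeasure_smul (hB : IsBasis K b) (x : X) :
    x = qMeasure hB x • ((∏ i, b i ^ qExponent hB x i : Xˣ) : X) :=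
  (hB x).exists.choose_spec

theorem qMeasure_eq_of_eq_smul (hB : IsBasis K b) {x : X} {μ : K} {k : Fin n → ℤ}
    (h : x = μ • ((∏ i, b i ^ k i : Xˣ) : X)) : qMeasure hB x = μ :=
  congrArg Prod.fst ((hB x).unique (hB x).exists.choose_spec (y₂ := (μ, k)) h)

theorem qMeasure_one (hB : IsBasis K b) : qMeasure hB (1 : X) = 1 :=
  qMeasure_eq_of_eq_smul hB (k := 0) (by simp [ScalableMonoid.one_smul])

theorem qMeasure_mul (hB : IsBasis K b) (x y : X) :
    qMeasure hB (x * y) = qMeasure hB x * qMeasure hB y := by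
  apply qMeasure_eq_of_eq_smul hB (k := qExponent hB x + qExponent hB y)
  conv_lhs => rw [eq_qMeasure_smul hB x, eq_qMeasure_smul hB y]
  simp only [ScalableMonoid.smul_mul_smul, ← Units.val_mul, ← Finset.prod_mul_distrib,
    Pi.add_apply, zpow_add]

theorem qMeasure_mul_eq_one (hB : IsBasis K b) {x y : X} (h : x * y = 1) :
    qMeasure hB x * qMeasure hB y = 1 := by
  rw [← qMeasure_mul, h, qMeasure_one]

theorem qMeasure_ne_zero_of_isUnit (hB : IsBasis K b) {x : X} (hx : IsUnit x) :
    qMeasure hB x ≠ 0 := by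
  obtain ⟨u, rfl⟩ := hx
  exact left_ne_zero_of_mul_eq_one (qMeasure_mul_eq_one hB u.mul_inv)

theorem isUnit_of_qMeasure_ne_zero (hB : IsBasis K b) {x : X} (hx : qMeasure hB x ≠ 0) :
    IsUnit x := by
  rw [eq_qMeasure_smul hB x]
  exact ScalableMonoid.isUnit_smul_units hx _

end QMeasure

theorem isUnit_iff_qMeasure_ne_zero {K X : Type*} [Field K] [CommMonoid X] [ScalableMonoid K X]
    {n : ℕ} {b : Fin n → Xˣ} (hB : IsBasis K b) (x : X) :
    (IsUnit x ↔ qMeasure hB x ≠ 0) ∧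
    (∀ y : X, x * y = 1 → y * x = 1 → qMeasure hB y = (qMeasure hB x)⁻¹) :=
  ⟨⟨qMeasure_ne_zero_of_isUnit hB, isUnit_of_qMeasure_ne_zero hB⟩,
    fun _ hxy _ => eq_inv_of_mul_eq_one_right (qMeasure_mul_eq_one hB hxy)⟩
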